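/- arXiv:math/0005031 — 4 statements merged into one kernel-verified Lean document; each statement's English description precedes it below -/
import Mathlib

section
/- Fix d ≥ 1, ω ∈ ℝ^d, a nonzero integer vector h ∈ ℤ^d with h·ω ≠ 0, real numbers a < b, and an arbitrary sequence (α_k)_{k≥1} in ℝ^d. Define the normalized Weyl sums S_h(N, τ) = (1/N)∑_{k=1}^N exp(2πi(h·α_k + k τ (h·ω))). Then there exists a constant C > 0, depending only on a, b and h·ω, such that ∫_a^b |S_h(N, τ)|² dτ ≤ C (log N)/N for all integers N ≥ 2. -/
/-!
Expanding the square, `∫ₐᵇ |∑ₖ e(Aₖ + kτθ)|² dτ = ∑ₖ,ₗ e(Aₖ - Aₗ) ∫ₐᵇ e((k - l)θτ) dτ`.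
The `N` diagonal terms contribute `|b - a|` each, and an off-diagonal integral is at most
`1 / (π |θ| |k - l|)`, so each row contributes at most `2 (1 + log N) / (π |θ|)` by the
harmonic-sum bound. Dividing by `N²` gives `O(log N / N)`.
-/

open Finset Complex
open scoped Real

lemma sum_inv_le_one_add_log {N : ℕ} {s : Finset ℕ} (g : ℕ → ℕ) (hg : Set.InjOn g s)
    (hgs : ∀ l ∈ s, g l ∈ Icc 1 N) : ∑ l ∈ s, ((g l : ℝ))⁻¹ ≤ 1 + Real.log N := by
  rw [← sum_image (f := fun m : ℕ => ((m : ℝ))⁻¹) hg]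
  calc ∑ m ∈ s.image g, ((m : ℝ))⁻¹ ≤ ∑ m ∈ Icc 1 N, ((m : ℝ))⁻¹ :=
        sum_le_sum_of_subset_of_nonneg (image_subset_iff.2 hgs) fun _ _ _ => by positivity
    _ ≤ 1 + Real.log N := by simpa [harmonic_eq_sum_Icc] using harmonic_le_one_add_log N

lemma sum_erase_inv_abs_sub_le {N k : ℕ} (hk : k ∈ Icc 1 N) :
    ∑ l ∈ (Icc 1 N).erase k, |(k : ℝ) - l|⁻¹ ≤ 2 * (1 + Real.log N) := by
  have hk := mem_Icc.1 hk
  rw [← sum_filter_add_sum_filter_not _ (· < k), two_mul]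
  gcongr ?_ + ?_
  · calc ∑ l ∈ ((Icc 1 N).erase k).filter (· < k), |(k : ℝ) - l|⁻¹
        = ∑ l ∈ ((Icc 1 N).erase k).filter (· < k), ((k - l : ℕ) : ℝ)⁻¹ := by
          refine sum_congr rfl fun l hl => ?_
          have hlk : l < k := (mem_filter.1 hl).2
          rw [Nat.cast_sub hlk.le, abs_of_pos (by simpa using hlk)]
      _ ≤ 1 + Real.log N := by
          refine sum_inv_le_one_add_log _ (fun x hx y hy hxy => ?_) fun l hl => ?_
          · simp only [mem_coe, mem_filter] at hx hy hxy
            omega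
          · simp only [mem_filter, mem_erase, mem_Icc] at hl ⊢
            omega
  · calc ∑ l ∈ ((Icc 1 N).erase k).filter (¬ · < k), |(k : ℝ) - l|⁻¹
        = ∑ l ∈ ((Icc 1 N).erase k).filter (¬ · < k), ((l - k : ℕ) : ℝ)⁻¹ := by
          refine sum_congr rfl fun l hl => ?_
          simp only [mem_filter, mem_erase] at hl
          have hlk : k < l := lt_of_le_of_ne (not_lt.1 hl.2) (Ne.symm hl.1.1)
          rw [Nat.cast_sub hlk.le, abs_sub_comm, abs_of_pos (by simpa using hlk)]
      _ ≤ 1 + Real.log N := by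
          refine sum_inv_le_one_add_log _ (fun x hx y hy hxy => ?_) fun l hl => ?_
          · simp only [mem_coe, mem_filter, mem_erase] at hx hy hxy
            omega
          · simp only [mem_filter, mem_erase, mem_Icc] at hl ⊢
            omega

lemma norm_integral_exp_mul_I_le {x : ℝ} (hx : x ≠ 0) (a b : ℝ) :
    ‖∫ τ in a..b, exp (x * τ * I)‖ ≤ 2 / |x| := by
  have hxI : (x : ℂ) * I ≠ 0 := mul_ne_zero (ofReal_ne_zero.2 hx) I_ne_zero
  simp_rw [mul_right_comm _ _ I]
  rw [integral_exp_mul_complex hxI, norm_div, norm_mul, norm_I, mul_one, norm_real,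
    Real.norm_eq_abs]
  gcongr
  calc ‖exp (x * I * b) - exp (x * I * a)‖ ≤ ‖exp (x * I * b)‖ + ‖exp (x * I * a)‖ :=
        norm_sub_le _ _
    _ = 2 := by
        simp only [mul_right_comm _ I, ← ofReal_mul, norm_exp_ofReal_mul_I]
        norm_num

lemma exp_mul_conj_exp (A B x y τ : ℝ) :
    exp (2 * π * I * (A + x * τ)) * (starRingEnd ℂ) (exp (2 * π * I * (B + y * τ))) =
      exp ((2 * π * (A - B) : ℝ) * I) * exp ((2 * π * (x - y) : ℝ) * τ * I) := by
  rw [← exp_conj, ← exp_add, ← exp_add]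
  congr 1
  simp only [map_mul, map_add, conj_I, conj_ofReal, map_ofNat]
  push_cast
  ring

lemma integral_norm_sq_sum_exp_le (s : Finset ℕ) (A : ℕ → ℝ) (θ a b : ℝ) :
    ∫ τ in a..b, ‖∑ k ∈ s, exp (2 * π * I * (A k + (k : ℝ) * τ * θ))‖ ^ 2 ≤
      ∑ k ∈ s, ∑ l ∈ s, ‖∫ τ in a..b, exp ((2 * π * ((k - l) * θ) : ℝ) * τ * I)‖ := by
  set S : ℝ → ℂ := fun τ => ∑ k ∈ s, exp (2 * π * I * (A k + (k : ℝ) * τ * θ))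
  have hS : Continuous S := by fun_prop
  have hexpand : ∀ τ : ℝ, S τ * (starRingEnd ℂ) (S τ) = ∑ k ∈ s, ∑ l ∈ s,
      exp ((2 * π * (A k - A l) : ℝ) * I) * exp ((2 * π * ((k - l) * θ) : ℝ) * τ * I) := by
    intro τ
    simp only [S, map_sum, sum_mul_sum]
    refine sum_congr rfl fun k _ => sum_congr rfl fun l _ => ?_
    convert exp_mul_conj_exp (A k) (A l) (k * θ) (l * θ) τ using 3 <;> push_cast <;> ring_nf
  calc ∫ τ in a..b, ‖S τ‖ ^ 2 ≤ ‖((∫ τ in a..b, ‖S τ‖ ^ 2 : ℝ) : ℂ)‖ := by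
        rw [norm_real, Real.norm_eq_abs]
        exact le_abs_self _
    _ = ‖∫ τ in a..b, S τ * (starRingEnd ℂ) (S τ)‖ := by
        simp_rw [mul_conj', ← ofReal_pow, intervalIntegral.integral_ofReal]
    _ ≤ _ := by
        simp_rw [hexpand]
        rw [intervalIntegral.integral_finsetSum fun k _ =>
          Continuous.intervalIntegrable (by fun_prop) a b]
        refine (norm_sum_le _ _).trans (sum_le_sum fun k _ => ?_)
        rw [intervalIntegral.integral_finsetSum fun l _ =>
          Continuous.intervalIntegrable (by fun_prop) a b]
        refine (norm_sum_le _ _).trans (sum_le_sum fun l _ => ?_)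
        rw [intervalIntegral.integral_const_mul, norm_mul, norm_exp_ofReal_mul_I, one_mul]

lemma integral_norm_sq_sum_exp_Icc_le (N : ℕ) (A : ℕ → ℝ) {θ : ℝ} (hθ : θ ≠ 0) (a b : ℝ) :
    ∫ τ in a..b, ‖∑ k ∈ Icc 1 N, exp (2 * π * I * (A k + (k : ℝ) * τ * θ))‖ ^ 2 ≤
      N * (|b - a| + 2 / (π * |θ|) * (1 + Real.log N)) := by
  refine (integral_norm_sq_sum_exp_le _ A θ a b).trans ?_
  calc _ ≤ ∑ k ∈ Icc 1 N, (|b - a| + 2 / (π * |θ|) * (1 + Real.log N)) :=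
        sum_le_sum fun k hk => ?_
    _ = _ := by simp [mul_add]
  rw [← add_sum_erase _ _ hk]
  gcongr ?_ + ?_
  · simp [-ofReal_sub]
  · have hoff : ∀ l ∈ (Icc 1 N).erase k,
        ‖∫ τ in a..b, exp ((2 * π * ((k - l) * θ) : ℝ) * τ * I)‖ ≤
          (π * |θ|)⁻¹ * |(k : ℝ) - l|⁻¹ := by
      intro l hl
      have hkl : (k : ℝ) - l ≠ 0 := sub_ne_zero.2 (by exact_mod_cast (ne_of_mem_erase hl).symm)
      refine (norm_integral_exp_mul_I_le (by positivity) a b).trans_eq ?_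
      rw [abs_mul, abs_mul, abs_mul, abs_two, abs_of_pos Real.pi_pos]
      field_simp
    calc _ ≤ ∑ l ∈ (Icc 1 N).erase k, (π * |θ|)⁻¹ * |(k : ℝ) - l|⁻¹ := sum_le_sum hoff
      _ = (π * |θ|)⁻¹ * ∑ l ∈ (Icc 1 N).erase k, |(k : ℝ) - l|⁻¹ := (mul_sum ..).symm
      _ ≤ (π * |θ|)⁻¹ * (2 * (1 + Real.log N)) := by gcongr; exact sum_erase_inv_abs_sub_le hk
      _ = 2 / (π * |θ|) * (1 + Real.log N) := by ring

lemma add_mul_one_add_log_le {x y : ℝ} (hx : 0 ≤ x) (hy : 0 ≤ y) {N : ℕ} (hN : 2 ≤ N) :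
    x + y * (1 + Real.log N) ≤ ((x + y) / Real.log 2 + y) * Real.log N := by
  have hlog2 : 0 < Real.log 2 := Real.log_pos one_lt_two
  have hlogN : 1 ≤ Real.log N / Real.log 2 :=
    (one_le_div hlog2).2 (Real.log_le_log two_pos (by exact_mod_cast hN))
  calc x + y * (1 + Real.log N) = (x + y) * 1 + y * Real.log N := by ring
    _ ≤ (x + y) * (Real.log N / Real.log 2) + y * Real.log N := by gcongr
    _ = ((x + y) / Real.log 2 + y) * Real.log N := by ring

theorem stmt_1_general (d : ℕ) (ω : Fin d → ℝ) (h : Fin d → ℤ)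
    (hhω : (∑ i, (h i : ℝ) * ω i) ≠ 0) (a b : ℝ)
    (α : ℕ → Fin d → ℝ) :
    ∃ C > (0 : ℝ), ∀ N : ℕ, 2 ≤ N →
      (∫ τ in a..b,
          (‖(1 / (N : ℂ)) * ∑ k ∈ Finset.Icc 1 N,
            Complex.exp (2 * Real.pi * Complex.I *
              (((∑ i, (h i : ℝ) * α k i) : ℝ) +
                (k : ℝ) * τ * ((∑ i, (h i : ℝ) * ω i) : ℝ)))‖) ^ 2)
        ≤ C * Real.log N / N := by
  set θ := ∑ i, (h i : ℝ) * ω i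
  refine ⟨(|b - a| + 2 / (π * |θ|)) / Real.log 2 + 2 / (π * |θ|), by positivity, fun N hN => ?_⟩
  calc _ = (∫ τ in a..b, ‖∑ k ∈ Icc 1 N,
          exp (2 * π * I * ((∑ i, (h i : ℝ) * α k i : ℝ) + (k : ℝ) * τ * θ))‖ ^ 2) / N ^ 2 := by
        simp_rw [norm_mul, mul_pow, norm_div, norm_one, norm_natCast, div_pow, one_pow,
          intervalIntegral.integral_const_mul]
        ring
    _ ≤ N * (|b - a| + 2 / (π * |θ|) * (1 + Real.log N)) / N ^ 2 := by
        gcongr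
        exact integral_norm_sq_sum_exp_Icc_le N _ hhω a b
    _ = (|b - a| + 2 / (π * |θ|) * (1 + Real.log N)) / N := by field_simp
    _ ≤ _ := by
        gcongr
        exact add_mul_one_add_log_le (abs_nonneg _) (by positivity) hN

/-- the mean-square bound `∫_a^b |S_h(N,τ)|² dτ ≤ C log N / N` for the
normalized Weyl sums `S_h(N,τ) = (1/N) ∑_{k=1}^N e^{2πi (h·α_k + kτ (h·ω))}`. -/
theorem stmt_1 (d : ℕ) (hd : 1 ≤ d) (ω : Fin d → ℝ) (h : Fin d → ℤ) (hh : h ≠ 0)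
    (hhω : (∑ i, (h i : ℝ) * ω i) ≠ 0) (a b : ℝ) (hab : a < b)
    (α : ℕ → Fin d → ℝ) :
    ∃ C > (0 : ℝ), ∀ N : ℕ, 2 ≤ N →
      (∫ τ in a..b,
          (‖(1 / (N : ℂ)) * ∑ k ∈ Finset.Icc 1 N,
            Complex.exp (2 * Real.pi * Complex.I *
              (((∑ i, (h i : ℝ) * α k i) : ℝ) +
                (k : ℝ) * τ * ((∑ i, (h i : ℝ) * ω i) : ℝ)))‖) ^ 2)
        ≤ C * Real.log N / N :=
  stmt_1_general d ω h hhω a b α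
end

section
/- Let ω ∈ ℝ be irrational. There exists a sequence (β_k)_{k≥1} of real numbers such that, setting α_k = β_1 + ⋯ + β_k, for every positive integer τ the sequence (α_k + kτω mod 1)_{k≥1} is not uniformly distributed in ℝ/ℤ; in fact, for every positive integer τ the set of indices k with α_k + kτω ∈ ℤ has positive lower density in ℕ. -/
/-!
Choose the kicks so that `α_k = -k (v₂(k) + 1) ω`. Then `α_k + kτω = k (τ - v₂(k) - 1) ω`, which
by irrationality of `ω` is an integer exactly when `v₂(k) = τ - 1`, and the integers of `2`-adic
valuation `τ - 1` have positive density. A sequence that returns to one point of the circle with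
positive lower density is not uniformly distributed: a continuous tent function at that point has
integral smaller than the density, yet the lim inf of its averages along the sequence is at least
that density.
-/

open MeasureTheory Filter
open scoped Classical

noncomputable def lowerDensity (P : ℕ → Prop) : ℝ :=
  liminf (fun N : ℕ => (((Finset.Icc 1 N).filter P).card : ℝ) / N) atTop

def IsUniformlyDistributed (x : ℕ → UnitAddCircle) : Prop :=
  ∀ F : C(UnitAddCircle, ℝ),
    Tendsto (fun N : ℕ => (1 / (N : ℝ)) * ∑ k ∈ Finset.Icc 1 N, F (x k)) atTop
      (nhds (∫ y, F y))

lemma card_filter_Icc_div_le_one (P : ℕ → Prop) (N : ℕ) :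
    (((Finset.Icc 1 N).filter P).card : ℝ) / N ≤ 1 := by
  refine div_le_one_of_le₀ ?_ N.cast_nonneg
  exact_mod_cast (Finset.card_filter_le _ _).trans (Nat.card_Icc 1 N).le

lemma lowerDensity_congr {P Q : ℕ → Prop} (h : ∀ k, 1 ≤ k → (P k ↔ Q k)) :
    lowerDensity P = lowerDensity Q := by
  unfold lowerDensity
  congr! 5 with N
  exact Finset.filter_congr fun k hk => h k (Finset.mem_Icc.1 hk).1

lemma le_lowerDensity {P : ℕ → Prop} {δ : ℝ}
    (h : ∀ᶠ N : ℕ in atTop, δ * N ≤ ((Finset.Icc 1 N).filter P).card) :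
    δ ≤ lowerDensity P := by
  refine le_liminf_of_le
    (isBoundedUnder_of ⟨1, card_filter_Icc_div_le_one P⟩).isCoboundedUnder_ge ?_
  filter_upwards [h, eventually_gt_atTop 0] with N hδN hN
  rwa [le_div_iff₀ (by exact_mod_cast hN)]

lemma div_pow_succ_le_card_filter_padicValNat_eq (p : ℕ) [hp : Fact p.Prime] (t N : ℕ) :
    N / p ^ (t + 1) ≤ ((Finset.Icc 1 N).filter (fun k => padicValNat p k = t)).card := by
  have hp0 : 0 < p := hp.out.pos
  rw [← Finset.card_range (N / p ^ (t + 1))]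
  refine Finset.card_le_card_of_injOn (fun j => p ^ t * (p * j + 1)) (fun j hj => ?_) ?_
  · simp only [Finset.coe_range, Set.mem_Iio] at hj
    simp only [Finset.coe_filter, Set.mem_ofPred_eq, Finset.mem_Icc]
    refine ⟨⟨Nat.one_le_iff_ne_zero.2 (by positivity), ?_⟩, ?_⟩
    · calc p ^ t * (p * j + 1) ≤ (j + 1) * p ^ (t + 1) := by
            rw [pow_succ]; nlinarith [pow_pos hp0 t]
        _ ≤ N / p ^ (t + 1) * p ^ (t + 1) := Nat.mul_le_mul_right _ hj
        _ ≤ N := Nat.div_mul_le_self _ _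
    · have hndvd : ¬ p ∣ p * j + 1 := fun h =>
        hp.out.one_lt.ne' (Nat.dvd_one.1 ((Nat.dvd_add_right (dvd_mul_right p j)).1 h))
      rw [padicValNat.mul (by positivity) (by omega), padicValNat.prime_pow,
        padicValNat.eq_zero_of_not_dvd hndvd, add_zero]
  · intro i _ j _ hij
    have := Nat.eq_of_mul_eq_mul_left (by positivity) hij
    exact Nat.eq_of_mul_eq_mul_left hp0 (by omega)

lemma lowerDensity_padicValNat_eq_pos (p : ℕ) [hp : Fact p.Prime] (t : ℕ) :
    0 < lowerDensity (fun k => padicValNat p k = t) := by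
  set q := p ^ (t + 1)
  have hq : 0 < q := pow_pos hp.out.pos _
  refine (by positivity : (0 : ℝ) < (2 * q : ℝ)⁻¹).trans_le (le_lowerDensity ?_)
  filter_upwards [eventually_ge_atTop q] with N hN
  have hN_lt : N < N / q * q + q := Nat.lt_div_mul_add hq
  have hquot : 1 ≤ N / q := (Nat.one_le_div_iff hq).2 hN
  have hN_le : N ≤ 2 * q * (N / q) := by nlinarith
  have hcount := div_pow_succ_le_card_filter_padicValNat_eq p t N
  rw [inv_mul_le_iff₀ (by positivity)]
  exact_mod_cast hN_le.trans (Nat.mul_le_mul_left _ (by convert hcount))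

lemma AddCircle.exists_continuousMap_nonneg_apply_eq_one_integral_lt {T : ℝ} [Fact (0 < T)]
    (a : AddCircle T) {ε : ℝ} (hε : 0 < ε) :
    ∃ F : C(AddCircle T, ℝ), (∀ x, 0 ≤ F x) ∧ F a = 1 ∧ ∫ y, F y < ε := by
  set r := ε / 4 with hr_def
  have hr : 0 < r := by positivity
  set B := Metric.closedBall a r
  let F : C(AddCircle T, ℝ) := ⟨fun x => max 0 (1 - ‖x - a‖ / r), by fun_prop⟩
  have hF_le : ∀ x, F x ≤ B.indicator 1 x := by
    intro x
    by_cases hx : x ∈ B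
    · rw [Set.indicator_of_mem hx]
      exact max_le zero_le_one (sub_le_self _ (by positivity))
    · rw [Set.indicator_of_notMem hx]
      rw [Metric.mem_closedBall, dist_eq_norm, not_le] at hx
      exact max_le le_rfl (by rw [sub_nonpos, one_le_div hr]; exact hx.le)
  refine ⟨F, fun x => le_max_left _ _, by simp [F], ?_⟩
  calc ∫ y, F y ≤ ∫ y, B.indicator 1 y :=
        integral_mono (F.continuous.integrable_of_hasCompactSupport (.of_compactSpace _))
          ((integrable_const 1).indicator Metric.isClosed_closedBall.measurableSet) hF_le
    _ = volume.real B := integral_indicator_one Metric.isClosed_closedBall.measurableSet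
    _ ≤ 2 * r := by
        rw [measureReal_def, AddCircle.volume_closedBall,
          ENNReal.toReal_ofReal (le_min (Fact.out : 0 < T).le (by positivity))]
        exact min_le_right _ _
    _ < ε := by linarith

lemma not_isUniformlyDistributed_of_lowerDensity_pos {x : ℕ → UnitAddCircle} {a : UnitAddCircle}
    (h : 0 < lowerDensity (fun k => x k = a)) : ¬ IsUniformlyDistributed x := by
  intro hx
  obtain ⟨F, hF_nonneg, hFa, hF_int⟩ :=
    AddCircle.exists_continuousMap_nonneg_apply_eq_one_integral_lt a h
  have : lowerDensity (fun k => x k = a) ≤ ∫ y, F y := by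
    rw [← (hx F).liminf_eq]
    refine liminf_le_liminf (.of_forall fun N => ?_)
      (isBoundedUnder_of ⟨0, fun N => by positivity⟩)
      (hx F).isBoundedUnder_le.isCoboundedUnder_ge
    rw [one_div_mul_eq_div, Finset.natCast_card_filter]
    refine div_le_div_of_nonneg_right (Finset.sum_le_sum fun k _ => ?_) N.cast_nonneg
    split_ifs with hk
    · rw [hk, hFa]
    · exact hF_nonneg _
  linarith

lemma Irrational.exists_intCast_mul_eq_intCast_iff {ω : ℝ} (hω : Irrational ω) (n : ℤ) :
    (∃ m : ℤ, n * ω = m) ↔ n = 0 := by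
  refine ⟨fun ⟨m, hm⟩ => ?_, fun hn => ⟨0, by simp [hn]⟩⟩
  by_contra hn
  exact (hω.intCast_mul hn).ne_int m hm

lemma Finset.sum_Icc_one_sub_pred {G : Type*} [AddCommGroup G] (f : ℕ → G) (k : ℕ) :
    ∑ j ∈ Finset.Icc 1 k, (f j - f (j - 1)) = f k - f 0 := by
  induction k with
  | zero => simp
  | succ k ih =>
    rw [Finset.sum_Icc_succ_top (Nat.le_add_left 1 k), ih, Nat.add_sub_cancel]
    abel

noncomputable def kickPhase (ω : ℝ) (k : ℕ) : ℝ := -(k * (padicValNat 2 k + 1) * ω)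

noncomputable def kick (ω : ℝ) (k : ℕ) : ℝ := kickPhase ω k - kickPhase ω (k - 1)

lemma sum_Icc_kick (ω : ℝ) (k : ℕ) : ∑ j ∈ Finset.Icc 1 k, kick ω j = kickPhase ω k :=
  (Finset.sum_Icc_one_sub_pred (kickPhase ω) k).trans (by simp [kickPhase])

lemma exists_kickPhase_add_eq_intCast_iff {ω : ℝ} (hω : Irrational ω) {k : ℕ} (hk : 1 ≤ k)
    (τ : ℕ) : (∃ m : ℤ, kickPhase ω k + k * τ * ω = m) ↔ padicValNat 2 k + 1 = τ := by
  have hphase :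
      kickPhase ω k + k * τ * ω = ((k * (τ - (padicValNat 2 k + 1)) : ℤ) : ℝ) * ω := by
    simp only [kickPhase, Int.cast_mul, Int.cast_sub, Int.cast_add, Int.cast_natCast,
      Int.cast_one]
    ring
  rw [hphase, hω.exists_intCast_mul_eq_intCast_iff, mul_eq_zero]
  omega

/-- cyclic subgroups of the circle are kick unstable: for any irrational `ω`
there is a sequence of kicks `β_k` (with partial sums `α_k`) such that for every positive
integer period `τ` the orbit `α_k + kτω (mod 1)` is not uniformly distributed; in fact the
set of indices `k` with `α_k + kτω ∈ ℤ` has positive lower density. -/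
theorem stmt_2 (ω : ℝ) (hω : Irrational ω) :
    ∃ β : ℕ → ℝ, ∀ τ : ℕ, 0 < τ →
      (¬ ∀ F : C(UnitAddCircle, ℝ),
          Tendsto
            (fun N : ℕ => (1 / (N : ℝ)) * ∑ k ∈ Finset.Icc 1 N,
              F ((((∑ j ∈ Finset.Icc 1 k, β j) + (k : ℝ) * (τ : ℝ) * ω : ℝ)) : UnitAddCircle))
            atTop (nhds (∫ y, F y))) ∧
      0 < liminf
          (fun N : ℕ =>
            (((Finset.Icc 1 N).filter
                (fun k => ∃ m : ℤ, (∑ j ∈ Finset.Icc 1 k, β j) + (k : ℝ) * (τ : ℝ) * ω = m)).card : ℝ)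
              / (N : ℝ))
          atTop := by
  refine ⟨kick ω, fun τ hτ => ?_⟩
  have hdensity : 0 < lowerDensity
      (fun k => ∃ m : ℤ, (∑ j ∈ Finset.Icc 1 k, kick ω j) + (k : ℝ) * (τ : ℝ) * ω = m) := by
    refine (lowerDensity_padicValNat_eq_pos 2 (τ - 1)).trans_eq (lowerDensity_congr fun k hk => ?_)
    rw [sum_Icc_kick, exists_kickPhase_add_eq_intCast_iff hω hk]
    omega
  refine ⟨not_isUniformlyDistributed_of_lowerDensity_pos (a := 0) ?_, hdensity⟩
  refine hdensity.trans_eq (lowerDensity_congr fun k _ => ?_)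
  rw [AddCircle.coe_eq_zero_iff]
  simp [eq_comm]
end

section
/- Let G be a group, let ρ : G → [0,∞) be sub-additive with constant C ≥ 0, and let h ∈ G satisfy liminf_{n→∞} ρ(hⁿ)/n > 0. Let (φ_i)_{i≥1} be a sequence in G all of whose terms lie in finitely many conjugacy classes of G. Then there exist a positive integer τ₀ and a constant c > 0 such that for every integer τ > τ₀ and every k ≥ 1, the kicked evolution satisfies ρ(f^{(k)}(τ)) ≥ c·k. -/
open Filter

/-- The kicked evolution `f^{(k)}(τ) = φ_k h^τ φ_{k-1} h^τ ⋯ φ_1 h^τ`. -/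
def kickedEvolution {G : Type*} [Group G] (φ : ℕ → G) (h : G) (τ : ℕ) : ℕ → G
  | 0 => 1
  | k + 1 => φ (k + 1) * h ^ τ * kickedEvolution φ h τ k

/-- if `ρ` is sub-additive with `liminf ρ(hⁿ)/n > 0` and the kicks lie in
finitely many conjugacy classes, then for all large enough integer periods `τ` the kicked
evolution grows linearly: `ρ(f^{(k)}(τ)) ≥ c k`. -/
theorem stmt_4 {G : Type*} [Group G] (ρ : G → ℝ) (hρ0 : ∀ g, 0 ≤ ρ g)
    (C : ℝ) (hC : 0 ≤ C)
    (hconj : ∀ g h : G, |ρ (h * g * h⁻¹) - ρ g| ≤ C)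
    (hsub : ∀ g h : G, ρ (g * h) ≤ ρ g + ρ h + C)
    (h : G) (hh : 0 < liminf (fun n : ℕ => ρ (h ^ n) / n) atTop)
    (φ : ℕ → G)
    (hφ : ∃ S : Finset G, ∀ i : ℕ, 1 ≤ i → ∃ g ∈ S, ∃ u : G, φ i = u * g * u⁻¹) :
    ∃ τ₀ : ℕ, 0 < τ₀ ∧ ∃ c > (0 : ℝ), ∀ τ : ℕ, τ₀ < τ → ∀ k : ℕ, 1 ≤ k →
      c * k ≤ ρ (kickedEvolution φ h τ k) := by
  obtain ⟨S, hS⟩ := hφ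
  set L := liminf (fun n : ℕ => ρ (h ^ n) / n) atTop with hLdef
  have hbdd : IsBoundedUnder (· ≥ ·) atTop (fun n : ℕ => ρ (h ^ n) / n) :=
    ⟨0, eventually_map.2 (Filter.Eventually.of_forall fun n : ℕ => div_nonneg (hρ0 _) (Nat.cast_nonneg n))⟩
  have hev : ∀ᶠ n : ℕ in atTop, L / 2 < ρ (h ^ n) / (n : ℝ) :=
    eventually_lt_of_lt_liminf (by linarith) hbdd
  obtain ⟨N, hN⟩ := eventually_atTop.mp hev
  set M : ℝ := ∑ s ∈ S, ρ s⁻¹ with hMdef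
  have hM0 : 0 ≤ M := Finset.sum_nonneg fun s _ => hρ0 s⁻¹
  have hρ1 : 0 ≤ ρ 1 := hρ0 1
  -- bound on the inverses of kicks
  have hφbound : ∀ i : ℕ, 1 ≤ i → ρ (φ i)⁻¹ ≤ M + C := by
    intro i hi
    obtain ⟨g, hg, u, hu⟩ := hS i hi
    have heq : (φ i)⁻¹ = u * g⁻¹ * u⁻¹ := by rw [hu]; group
    have h1 := abs_le.mp (hconj g⁻¹ u)
    have h2 : ρ g⁻¹ ≤ M :=
      Finset.single_le_sum (fun s _ => hρ0 s⁻¹) hg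
    rw [heq]; linarith [h1.2]
  -- key induction
  have key : ∀ τ k : ℕ,
      ρ (h ^ (k * τ) * (kickedEvolution φ h τ k)⁻¹) ≤ ρ 1 + k * (M + 3 * C) := by
    intro τ k
    induction k with
    | zero => simp [kickedEvolution]
    | succ k ih =>
      have heq : h ^ ((k + 1) * τ) * (kickedEvolution φ h τ (k + 1))⁻¹
          = (h ^ τ * (h ^ (k * τ) * (kickedEvolution φ h τ k)⁻¹) * (h ^ τ)⁻¹)
            * (φ (k + 1))⁻¹ := by
        show h ^ ((k + 1) * τ) * (φ (k + 1) * h ^ τ * kickedEvolution φ h τ k)⁻¹ = _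
        rw [add_mul, one_mul, pow_add]; group
      rw [heq]
      have h1 := hsub (h ^ τ * (h ^ (k * τ) * (kickedEvolution φ h τ k)⁻¹) * (h ^ τ)⁻¹)
        (φ (k + 1))⁻¹
      have h2 := abs_le.mp (hconj (h ^ (k * τ) * (kickedEvolution φ h τ k)⁻¹) (h ^ τ))
      have h3 := hφbound (k + 1) (by omega)
      push_cast
      linarith [h2.2]
  -- choose τ₀
  set B : ℝ := (ρ 1 + M + 4 * C + 1) * 2 / L with hBdef
  refine ⟨N + 1 + ⌈B⌉₊, by omega, 1, one_pos, ?_⟩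
  intro τ hτ k hk
  have hτN : N ≤ k * τ := le_trans (by omega) (Nat.le_mul_of_pos_left τ (by omega))
  have hkτpos : (0 : ℝ) < (k * τ : ℕ) := by
    have : 0 < k * τ := Nat.mul_pos (by omega) (by omega)
    exact_mod_cast this
  have hlow : L / 2 * ((k * τ : ℕ) : ℝ) ≤ ρ (h ^ (k * τ)) := by
    have := hN (k * τ) hτN
    rw [lt_div_iff₀ hkτpos] at this
    linarith
  -- ρ(h^{kτ}) ≤ ρ(h^{kτ} f⁻¹) + ρ f + C
  have hsplit : ρ (h ^ (k * τ))
      ≤ ρ (h ^ (k * τ) * (kickedEvolution φ h τ k)⁻¹) + ρ (kickedEvolution φ h τ k) + C := by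
    have := hsub (h ^ (k * τ) * (kickedEvolution φ h τ k)⁻¹) (kickedEvolution φ h τ k)
    simpa using this
  have hkey := key τ k
  -- τ is large: L/2 * τ ≥ ρ1 + M + 4C + 1
  have hτbig : ρ 1 + M + 4 * C + 1 ≤ L / 2 * (τ : ℝ) := by
    have hB : B ≤ (⌈B⌉₊ : ℝ) := Nat.le_ceil B
    have hτ' : ((⌈B⌉₊ : ℕ) : ℝ) ≤ (τ : ℝ) := by
      have : ⌈B⌉₊ ≤ τ := by omega
      exact_mod_cast this
    have hBτ : (ρ 1 + M + 4 * C + 1) * 2 / L ≤ (τ : ℝ) := le_trans hB hτ'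
    have h2 : (ρ 1 + M + 4 * C + 1) * 2 ≤ (τ : ℝ) * L := (div_le_iff₀ hh).mp hBτ
    nlinarith
  have hk1 : (1 : ℝ) ≤ (k : ℝ) := by exact_mod_cast hk
  have hcast : ((k * τ : ℕ) : ℝ) = (k : ℝ) * (τ : ℝ) := by push_cast; ring
  rw [hcast] at hlow
  have hmain : (k : ℝ) * (ρ 1 + M + 4 * C + 1) ≤ L / 2 * ((k : ℝ) * (τ : ℝ)) := by
    calc (k : ℝ) * (ρ 1 + M + 4 * C + 1) ≤ (k : ℝ) * (L / 2 * (τ : ℝ)) := by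
          apply mul_le_mul_of_nonneg_left hτbig (by linarith)
      _ = L / 2 * ((k : ℝ) * (τ : ℝ)) := by ring
  rw [one_mul]
  nlinarith [hρ0 (kickedEvolution φ h τ k)]
end

section
/- Let λ > 0 and let (p_k)_{k≥1} be a sequence of real polynomials such that p_k has degree k and its leading coefficient α_k satisfies |α_k| ≥ λ^k for all k. Then the set Y = {τ ∈ ℝ : the sequence (p_k(τ))_{k≥1} is bounded} has finite Lebesgue measure; in fact its Lebesgue measure is at most 8/λ. -/
/-!
Suppose `|p_k| ≤ C` for all `k ≥ 1` on a set `E` of measure `> m`. Greedily choosing least points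
of a compact subset of `E` gives nodes `x_0 < ⋯ < x_k` in `E` with `x_{i+1} - x_i ≥ m / k`.
Lagrange interpolation at these nodes writes the leading coefficient as
`∑ p_k(x_i) / ∏_{j ≠ i} (x_i - x_j)`, and `|x_i - x_j| ≥ |i - j| m / k` bounds it by
`2^k C / ((m / k)^k k!) ≤ (2e / m)^k C`. Hence `(λ m / 2e)^k ≤ C` for all `k`, impossible when
`m > 2e / λ`. So each set `{τ | ∀ k ≥ 1, |p_k τ| ≤ C}` has measure `≤ 2e / λ < 8 / λ`, and the set
of boundedness points is their increasing union over `C ∈ ℕ`.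
-/

open MeasureTheory Polynomial Finset Real
open scoped Nat

lemma prod_erase_range_abs_sub {i k : ℕ} (hik : i ≤ k) :
    ∏ j ∈ (range (k + 1)).erase i, |(i : ℝ) - j| = i ! * (k - i)! := by
  induction k, hik using Nat.le_induction with
  | base =>
    rw [range_add_one, erase_insert notMem_range_self, Nat.sub_self, Nat.factorial_zero,
      Nat.cast_one, mul_one, ← Nat.descFactorial_self, Nat.descFactorial_eq_prod_range,
      Nat.cast_prod]
    refine prod_congr rfl fun j hj => ?_
    have hji := (mem_range.1 hj).le
    rw [Nat.cast_sub hji, abs_of_nonneg (sub_nonneg.2 (by exact_mod_cast hji))]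
  | succ k hik ih =>
    rw [range_add_one, erase_insert_of_ne (by omega), prod_insert (by simp), ih,
      Nat.succ_sub hik, Nat.factorial_succ, abs_sub_comm]
    push_cast [Nat.cast_sub hik]
    rw [abs_of_nonneg (by linarith [(Nat.cast_le (α := ℝ)).2 hik])]
    ring

lemma sum_range_inv_factorial_mul_factorial (k : ℕ) :
    ∑ i ∈ range (k + 1), ((i ! * (k - i)! : ℝ))⁻¹ = 2 ^ k / k ! := by
  have hterm : ∀ i ∈ range (k + 1), ((i ! * (k - i)! : ℝ))⁻¹ = k.choose i / k ! := by
    intro i hi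
    rw [eq_div_iff (by positivity), ← Nat.choose_mul_factorial_mul_factorial
      (Nat.lt_succ_iff.1 (mem_range.1 hi))]
    push_cast
    field_simp
  rw [sum_congr rfl hterm, ← sum_div, ← Nat.cast_sum, Nat.sum_range_choose]
  norm_cast

lemma sub_mul_le_sub_of_add_le_succ {v : ℕ → ℝ} {d : ℝ} {k : ℕ}
    (hv : ∀ i < k, v i + d ≤ v (i + 1)) {i j : ℕ} (hij : i ≤ j) (hjk : j ≤ k) :
    ((j : ℝ) - i) * d ≤ v j - v i := by
  induction j, hij using Nat.le_induction with
  | base => simp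
  | succ j hij ih =>
    have := hv j (by omega)
    have := ih (by omega)
    push_cast
    linarith

lemma abs_sub_mul_le_abs_sub_of_add_le_succ {v : ℕ → ℝ} {d : ℝ} {k : ℕ}
    (hv : ∀ i < k, v i + d ≤ v (i + 1)) {i j : ℕ} (hi : i ≤ k) (hj : j ≤ k) :
    |(i : ℝ) - j| * d ≤ |v i - v j| := by
  rcases le_total i j with h | h
  · rw [abs_sub_comm, abs_sub_comm (v i),
      abs_of_nonneg (sub_nonneg.2 (by exact_mod_cast h : (i : ℝ) ≤ j))]
    exact (sub_mul_le_sub_of_add_le_succ hv h hj).trans (le_abs_self _)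
  · rw [abs_of_nonneg (sub_nonneg.2 (by exact_mod_cast h : (j : ℝ) ≤ i))]
    exact (sub_mul_le_sub_of_add_le_succ hv h hi).trans (le_abs_self _)

theorem abs_coeff_mul_le_of_add_le_succ {q : ℝ[X]} {k : ℕ} (hq : q.degree ≤ k) {v : ℕ → ℝ}
    {d C : ℝ} (hd : 0 < d) (hv : ∀ i < k, v i + d ≤ v (i + 1))
    (hC : ∀ i ≤ k, |q.eval (v i)| ≤ C) :
    |q.coeff k| * (d ^ k * k !) ≤ 2 ^ k * C := by
  have hsep : ∀ i ∈ range (k + 1), ∀ j ∈ range (k + 1), |(i : ℝ) - j| * d ≤ |v i - v j| :=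
    fun i hi j hj => abs_sub_mul_le_abs_sub_of_add_le_succ hv (Nat.lt_succ_iff.1 (mem_range.1 hi))
      (Nat.lt_succ_iff.1 (mem_range.1 hj))
  have hinj : Set.InjOn v (range (k + 1)) := by
    intro i hi j hj hvij
    have h := hsep i hi j hj
    rw [hvij, sub_self, abs_zero] at h
    have : |(i : ℝ) - j| = 0 := le_antisymm (nonpos_of_mul_nonpos_left h hd) (abs_nonneg _)
    exact_mod_cast sub_eq_zero.1 (abs_eq_zero.1 this)
  have hnode : ∀ i ∈ range (k + 1),
      d ^ k * (i ! * (k - i)! : ℝ) ≤ ∏ j ∈ (range (k + 1)).erase i, |v i - v j| := by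
    intro i hi
    calc d ^ k * (i ! * (k - i)! : ℝ) = ∏ j ∈ (range (k + 1)).erase i, (|(i : ℝ) - j| * d) := by
          rw [prod_mul_distrib, prod_const, card_erase_of_mem hi, card_range,
            add_tsub_cancel_right, prod_erase_range_abs_sub (Nat.lt_succ_iff.1 (mem_range.1 hi)),
            mul_comm]
      _ ≤ ∏ j ∈ (range (k + 1)).erase i, |v i - v j| :=
          prod_le_prod (fun _ _ => by positivity) fun j hj => hsep i hi j (mem_of_mem_erase hj)
  have hlagrange := Lagrange.coeff_eq_sum hinj (P := q)
    (by rw [card_range]; exact hq.trans_lt (by exact_mod_cast k.lt_succ_self))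
  rw [card_range, add_tsub_cancel_right] at hlagrange
  have hC0 : 0 ≤ C := (abs_nonneg _).trans (hC 0 (Nat.zero_le k))
  have hbound : |q.coeff k| ≤ 2 ^ k * C / (d ^ k * k !) := calc
    |q.coeff k| ≤ ∑ i ∈ range (k + 1),
        |q.eval (v i)| / ∏ j ∈ (range (k + 1)).erase i, |v i - v j| := by
          rw [hlagrange]
          refine (abs_sum_le_sum_abs _ _).trans_eq (sum_congr rfl fun i _ => ?_)
          rw [abs_div, abs_prod]
    _ ≤ ∑ i ∈ range (k + 1), C / (d ^ k * (i ! * (k - i)! : ℝ)) :=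
          sum_le_sum fun i hi => div_le_div₀ hC0 (hC i (Nat.lt_succ_iff.1 (mem_range.1 hi)))
            (by positivity) (hnode i hi)
    _ = C / d ^ k * ∑ i ∈ range (k + 1), ((i ! * (k - i)! : ℝ))⁻¹ := by
          rw [mul_sum]
          exact sum_congr rfl fun i _ => by rw [← div_div, div_eq_mul_inv (C / d ^ k)]
    _ = 2 ^ k * C / (d ^ k * k !) := by
          rw [sum_range_inv_factorial_mul_factorial]
          ring
  rwa [le_div_iff₀ (by positivity)] at hbound

theorem IsCompact.exists_add_le_succ_of_ofReal_lt {K : Set ℝ} (hK : IsCompact K) {δ : ℝ}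
    (hδ : 0 ≤ δ) {n : ℕ} (hvol : ENNReal.ofReal (n * δ) < volume K) :
    ∃ v : ℕ → ℝ, (∀ i ≤ n, v i ∈ K) ∧ ∀ i < n, v i + δ ≤ v (i + 1) := by
  induction n generalizing K with
  | zero =>
    obtain ⟨x, hx⟩ := nonempty_of_measure_ne_zero (ne_bot_of_gt hvol)
    exact ⟨fun _ => x, fun _ _ => hx, fun _ hi => absurd hi (Nat.not_lt_zero _)⟩
  | succ n ih =>
    have hne : K.Nonempty := nonempty_of_measure_ne_zero (ne_bot_of_gt hvol)
    set x₀ := sInf K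
    -- `x₀ = min K`; discarding `[x₀, x₀ + δ)` costs at most `δ` of measure
    have hcover : K ⊆ (K ∩ Set.Ici (x₀ + δ)) ∪ Set.Ico x₀ (x₀ + δ) := fun x hx =>
      (le_or_gt (x₀ + δ) x).imp (fun h => ⟨hx, h⟩) fun h => ⟨csInf_le hK.bddBelow hx, h⟩
    have hrest : ENNReal.ofReal (n * δ) < volume (K ∩ Set.Ici (x₀ + δ)) := by
      refine (ENNReal.add_lt_add_iff_right (ENNReal.ofReal_ne_top (r := δ))).1 ?_
      calc ENNReal.ofReal (n * δ) + ENNReal.ofReal δ = ENNReal.ofReal ((n + 1 : ℕ) * δ) := by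
            rw [← ENNReal.ofReal_add (by positivity) hδ]; push_cast; ring_nf
        _ < volume K := hvol
        _ ≤ volume (K ∩ Set.Ici (x₀ + δ)) + volume (Set.Ico x₀ (x₀ + δ)) :=
            (measure_mono hcover).trans (measure_union_le _ _)
        _ = volume (K ∩ Set.Ici (x₀ + δ)) + ENNReal.ofReal δ := by
            rw [Real.volume_Ico, add_sub_cancel_left]
    obtain ⟨w, hwK, hw⟩ := ih (hK.inter_right isClosed_Ici) hrest
    refine ⟨fun | 0 => x₀ | i + 1 => w i, ?_, ?_⟩
    · rintro (_ | i) hi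
      exacts [hK.sInf_mem hne, (hwK i (by omega)).1]
    · rintro (_ | i) hi
      exacts [(hwK 0 (by omega)).2, hw i (by omega)]

theorem MeasurableSet.exists_add_le_succ_of_ofReal_lt {E : Set ℝ} (hE : MeasurableSet E)
    {δ : ℝ} (hδ : 0 ≤ δ) {n : ℕ} (hvol : ENNReal.ofReal (n * δ) < volume E) :
    ∃ v : ℕ → ℝ, (∀ i ≤ n, v i ∈ E) ∧ ∀ i < n, v i + δ ≤ v (i + 1) := by
  obtain ⟨K, hKE, hK, hvolK⟩ := hE.exists_lt_isCompact hvol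
  obtain ⟨v, hvK, hv⟩ := hK.exists_add_le_succ_of_ofReal_lt hδ hvolK
  exact ⟨v, fun i hi => hKE (hvK i hi), hv⟩

theorem abs_coeff_mul_pow_le_of_ofReal_lt {q : ℝ[X]} {k : ℕ} (hk : k ≠ 0) (hq : q.degree ≤ k)
    {E : Set ℝ} (hE : MeasurableSet E) {m C : ℝ} (hm : 0 < m)
    (hvol : ENNReal.ofReal m < volume E) (hC : ∀ x ∈ E, |q.eval x| ≤ C) :
    |q.coeff k| * m ^ k ≤ (2 * exp 1) ^ k * C := by
  have hk₀ : (0 : ℝ) < k := by positivity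
  obtain ⟨v, hvE, hv⟩ := hE.exists_add_le_succ_of_ofReal_lt (δ := m / k) (n := k)
    (by positivity) (by rwa [mul_div_cancel₀ _ hk₀.ne'])
  have hnodes := abs_coeff_mul_le_of_add_le_succ hq (div_pos hm hk₀) hv fun i hi => hC _ (hvE i hi)
  have hpow_le_exp_mul_factorial : (k : ℝ) ^ k ≤ exp 1 ^ k * k ! := by
    rw [← exp_nat_mul, mul_one, ← div_le_iff₀ (by positivity)]
    exact pow_div_factorial_le_exp _ hk₀.le k
  calc |q.coeff k| * m ^ k = |q.coeff k| * ((m / k) ^ k * k ^ k) := by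
        rw [div_pow, div_mul_cancel₀ _ (by positivity)]
    _ ≤ |q.coeff k| * ((m / k) ^ k * (exp 1 ^ k * k !)) := by gcongr
    _ = exp 1 ^ k * (|q.coeff k| * ((m / k) ^ k * k !)) := by ring
    _ ≤ exp 1 ^ k * (2 ^ k * C) := by gcongr
    _ = (2 * exp 1) ^ k * C := by ring

theorem volume_setOf_forall_abs_eval_le_le {lam : ℝ} (hlam : 0 < lam) {p : ℕ → ℝ[X]}
    (hdeg : ∀ k, 1 ≤ k → (p k).degree ≤ k) (hcoeff : ∀ k, 1 ≤ k → lam ^ k ≤ |(p k).coeff k|)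
    (C : ℝ) :
    volume {τ : ℝ | ∀ k, 1 ≤ k → |(p k).eval τ| ≤ C} ≤ ENNReal.ofReal (2 * exp 1 / lam) := by
  set E := {τ : ℝ | ∀ k, 1 ≤ k → |(p k).eval τ| ≤ C}
  have hE : IsClosed E := by
    simp only [E, Set.ofPred_forall]
    exact isClosed_iInter fun k => isClosed_iInter fun _ =>
      isClosed_le (p k).continuous.abs continuous_const
  by_contra! hlt
  obtain ⟨m, -, hm, hmE⟩ := ENNReal.lt_iff_exists_real_btwn.1 hlt
  have hm' : 2 * exp 1 / lam < m := (ENNReal.ofReal_lt_ofReal_iff_of_nonneg (by positivity)).1 hm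
  have hratio : 1 < lam * m / (2 * exp 1) := by
    rw [div_lt_iff₀ hlam] at hm'
    rw [one_lt_div (by positivity)]
    linarith
  have hm₀ : 0 < m := lt_trans (by positivity) hm'
  obtain ⟨k, hk⟩ := pow_unbounded_of_one_lt C hratio
  have hk₁ : 1 ≤ k + 1 := Nat.le_add_left 1 k
  have hpolya := abs_coeff_mul_pow_le_of_ofReal_lt k.succ_ne_zero (hdeg (k + 1) hk₁)
    hE.measurableSet hm₀ hmE fun x hx => hx (k + 1) hk₁
  have : (lam * m / (2 * exp 1)) ^ (k + 1) ≤ C := by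
    rw [div_pow, div_le_iff₀ (by positivity), mul_pow, mul_comm C]
    exact (mul_le_mul_of_nonneg_right (hcoeff (k + 1) hk₁) (by positivity)).trans hpolya
  exact (hk.trans_le (pow_le_pow_right₀ hratio.le k.le_succ)).not_ge this

/-- if `p_k` is a sequence of real polynomials with `deg p_k = k` and
leading coefficients `α_k` satisfying `|α_k| ≥ λ^k`, then the set of `τ` at which the
sequence `(p_k(τ))` is bounded has Lebesgue measure at most `8/λ` (in particular finite). -/
theorem stmt_15 (lam : ℝ) (hlam : 0 < lam) (p : ℕ → Polynomial ℝ)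
    (hdeg : ∀ k : ℕ, 1 ≤ k → (p k).degree = k)
    (hlead : ∀ k : ℕ, 1 ≤ k → lam ^ k ≤ |(p k).leadingCoeff|) :
    volume {τ : ℝ | ∃ C : ℝ, ∀ k : ℕ, 1 ≤ k → |(p k).eval τ| ≤ C} < ⊤ ∧
    volume {τ : ℝ | ∃ C : ℝ, ∀ k : ℕ, 1 ≤ k → |(p k).eval τ| ≤ C} ≤
      ENNReal.ofReal (8 / lam) := by
  set T : ℕ → Set ℝ := fun n => {τ : ℝ | ∀ k, 1 ≤ k → |(p k).eval τ| ≤ n}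
  have hunion : {τ : ℝ | ∃ C : ℝ, ∀ k : ℕ, 1 ≤ k → |(p k).eval τ| ≤ C} = ⋃ n, T n := by
    ext τ
    simp only [T, Set.mem_ofPred_eq, Set.mem_iUnion]
    exact ⟨fun ⟨C, hC⟩ => ⟨⌈C⌉₊, fun k hk => (hC k hk).trans (Nat.le_ceil C)⟩,
      fun ⟨n, hn⟩ => ⟨n, hn⟩⟩
  have hmono : Monotone T := fun a b hab τ hτ k hk => (hτ k hk).trans (by exact_mod_cast hab)
  have hcoeff : ∀ k, 1 ≤ k → lam ^ k ≤ |(p k).coeff k| := fun k hk => by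
    simpa [leadingCoeff, natDegree_eq_of_degree_eq_some (hdeg k hk)] using hlead k hk
  have hbound : volume {τ : ℝ | ∃ C : ℝ, ∀ k : ℕ, 1 ≤ k → |(p k).eval τ| ≤ C} ≤
      ENNReal.ofReal (8 / lam) := by
    rw [hunion, hmono.measure_iUnion]
    refine iSup_le fun n => (volume_setOf_forall_abs_eval_le_le hlam (fun k hk => (hdeg k hk).le)
      hcoeff n).trans (ENNReal.ofReal_le_ofReal ?_)
    gcongr
    linarith [exp_one_lt_d9]
  exact ⟨hbound.trans_lt ENNReal.ofReal_lt_top, hbound⟩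
end
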